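/- For every θ > 0 and every n ≥ 2, the depth D_n^{(θ)} of the n-th inserted node in a Hoppe tree with parameter θ satisfies the distributional identity D_n^{(θ)} = 1 + Σ_{i=1}^{n-2} B_i in distribution, where B_1, …, B_{n-2} are independent Bernoulli random variables with P(B_i = 1) = 1 − P(B_i = 0) = 1/(θ + i) for i = 1, …, n−2. -/

import Mathlib

open MeasureTheory ProbabilityTheory Real Filter Topology

noncomputable section

/-- Depth of node `i` in the Hoppe tree grown from the parent choices `U`:
`U k ω` is the parent of node `k + 2` (a node in `{1, …, k + 1}`, almost surely);
node `1` is the root. The `min` clipping is irrelevant almost surely. -/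
def hoppeDepth {Ω : Type*} (U : ℕ → Ω → ℕ) (ω : Ω) : ℕ → ℕ
  | 0 => 0
  | 1 => 0
  | n + 2 => hoppeDepth U ω (min (U n ω) (n + 1)) + 1
  decreasing_by omega

/-- The parent choices of a Hoppe tree with parameter `θ`: `U k` is the (random) parent
of node `k + 2`, the choices being independent, node `k + 2` choosing its parent among
nodes `1, …, k + 1`, namely the root `1` with probability `θ / (θ + k)` and each other
node with probability `1 / (θ + k)`. -/
structure IsHoppeParents {Ω : Type*} [MeasurableSpace Ω] (θ : ℝ) (μ : Measure Ω)
    (U : ℕ → Ω → ℕ) : Prop where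
  meas : ∀ k, Measurable (U k)
  indep : iIndepFun U μ
  root : ∀ k : ℕ, μ {ω | U k ω = 1} = ENNReal.ofReal (θ / (θ + k))
  nonroot : ∀ k j : ℕ, 2 ≤ j → j ≤ k + 1 → μ {ω | U k ω = j} = ENNReal.ofReal (1 / (θ + k))
  range : ∀ k : ℕ, μ {ω | 1 ≤ U k ω ∧ U k ω ≤ k + 1} = 1

/-- Height of the Hoppe tree with `n` nodes: maximal depth over nodes `1, …, n`. -/
def hoppeHeight {Ω : Type*} (U : ℕ → Ω → ℕ) (ω : Ω) (n : ℕ) : ℕ :=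
  (Finset.Icc 1 n).sup (fun i => hoppeDepth U ω i)

/-- Internal path length of the Hoppe tree with `n` nodes: sum of the depths of
nodes `1, …, n`. -/
def hoppePathLength {Ω : Type*} (U : ℕ → Ω → ℕ) (ω : Ω) (n : ℕ) : ℕ :=
  ∑ i ∈ Finset.Icc 1 n, hoppeDepth U ω i

/-- Number of leaves of the Hoppe tree with `n` nodes: nodes `j ∈ {1, …, n}` that are
the parent of no node `k ∈ {2, …, n}`. -/
def hoppeLeafCount {Ω : Type*} (U : ℕ → Ω → ℕ) (ω : Ω) (n : ℕ) : ℕ :=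
  (@Finset.filter ℕ (fun j => ∀ k ∈ Finset.Icc 2 n, U (k - 2) ω ≠ j)
    (fun _ => Finset.decidableDforallFinset) (Finset.Icc 1 n)).card

/-! The parent of node `k + 3` has, given that it is not node `k + 2`, the same law as the parent
of node `k + 2`: both are uniform on `{2, …, k + 1}` up to the root having weight `θ`. Hence
`P(D_{k+3} = d + 1) = (θ + k)/(θ + k + 1) · P(D_{k+2} = d + 1) + 1/(θ + k + 1) · P(D_{k+2} = d)`,
which is exactly how the law of `1 + B_1 + ⋯ + B_m` evolves when the independent Bernoulli
variable `B_{m+1}` is added. Both laws start from the point mass at `1`, so they agree. -/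

open Set
open scoped ENNReal

section Deterministic

variable {Ω Ω' : Type*}

theorem hoppeDepth_add_two (U : ℕ → Ω → ℕ) (ω : Ω) (k : ℕ) :
    hoppeDepth U ω (k + 2) = hoppeDepth U ω (min (U k ω) (k + 1)) + 1 := by
  rw [hoppeDepth]

theorem hoppeDepth_add_two_of_le {U : ℕ → Ω → ℕ} {ω : Ω} {k : ℕ} (h : U k ω ≤ k + 1) :
    hoppeDepth U ω (k + 2) = hoppeDepth U ω (U k ω) + 1 := by
  rw [hoppeDepth_add_two, min_eq_left h]

theorem hoppeDepth_two (U : ℕ → Ω → ℕ) (ω : Ω) : hoppeDepth U ω 2 = 1 := by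
  rw [hoppeDepth_add_two]
  rcases Nat.le_one_iff_eq_zero_or_eq_one.mp (min_le_right (U 0 ω) 1) with h | h <;>
    rw [h] <;> simp [hoppeDepth]

theorem hoppeDepth_congr {U : ℕ → Ω → ℕ} {V : ℕ → Ω' → ℕ} {ω : Ω} {ω' : Ω'} {m : ℕ}
    (h : ∀ k < m, U k ω = V k ω') : ∀ j ≤ m + 1, hoppeDepth U ω j = hoppeDepth V ω' j := by
  intro j
  induction j using Nat.strong_induction_on with
  | _ j ih =>
    intro hj
    match j with
    | 0 | 1 => simp [hoppeDepth]
    | k + 2 =>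
      rw [hoppeDepth_add_two, hoppeDepth_add_two, h k (by omega), ih _ (by omega) (by omega)]

theorem exists_measurable_hoppeDepth_eq_comp (U : ℕ → Ω → ℕ) {j k : ℕ} (hj : j ≤ k + 1) :
    ∃ g : (Finset.range k → ℕ) → ℕ, Measurable g ∧
      ∀ ω, hoppeDepth U ω j = g (fun i => U i ω) := by
  refine ⟨fun v => hoppeDepth (fun i v => if h : i ∈ Finset.range k then v ⟨i, h⟩ else 0) v j,
    measurable_of_countable _, fun ω => hoppeDepth_congr (fun i hi => ?_) j hj⟩
  simp [hi]

end Deterministic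

section Independence

variable {Ω : Type*} [MeasurableSpace Ω] {U : ℕ → Ω → ℕ}

theorem measurable_hoppeDepth (hU : ∀ k, Measurable (U k)) (j : ℕ) :
    Measurable (fun ω => hoppeDepth U ω j) := by
  obtain ⟨g, hg, hgU⟩ := exists_measurable_hoppeDepth_eq_comp U (Nat.le_succ j)
  simp_rw [hgU]
  exact hg.comp (measurable_pi_lambda _ fun i => hU i)

theorem indepFun_hoppeDepth_parent {μ : Measure Ω} (hind : iIndepFun U μ)
    (hU : ∀ k, Measurable (U k)) {j k : ℕ} (hj : j ≤ k + 1) :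
    IndepFun (fun ω => hoppeDepth U ω j) (U k) μ := by
  obtain ⟨g, hg, hgU⟩ := exists_measurable_hoppeDepth_eq_comp U hj
  have hdisj : Disjoint (Finset.range k) {k} := by simp
  simp_rw [hgU]
  exact (hind.indepFun_finset _ _ hdisj hU).comp hg
    (measurable_pi_apply ⟨k, Finset.mem_singleton_self k⟩)

end Independence

section TotalProbability

variable {Ω β : Type*} [MeasurableSpace Ω] [MeasurableSpace β] [MeasurableSingletonClass β]
  {μ : Measure Ω}

theorem measure_eq_sum_measure_inter_preimage_singleton {Y : Ω → β} (hY : Measurable Y)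
    {s : Finset β} (hs : ∀ᵐ ω ∂μ, Y ω ∈ s) (E : Set Ω) :
    μ E = ∑ j ∈ s, μ (E ∩ Y ⁻¹' {j}) := by
  have hfib : ∀ j ∈ s, MeasurableSet (Y ⁻¹' {j}) := fun j _ => hY (measurableSet_singleton j)
  calc μ E = μ (E ∩ Y ⁻¹' s) := (measure_inter_conull hs).symm
    _ = μ.restrict E (Y ⁻¹' s) := by rw [Measure.restrict_apply (hY s.measurableSet), inter_comm]
    _ = ∑ j ∈ s, μ (E ∩ Y ⁻¹' {j}) := by
      rw [← sum_measure_preimage_singleton s hfib]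
      refine Finset.sum_congr rfl fun j hj => ?_
      rw [Measure.restrict_apply (hfib j hj), inter_comm]

theorem ae_mem_of_measure_preimage_eq_one [IsProbabilityMeasure μ] {Y : Ω → β}
    (hY : Measurable Y) {s : Finset β} (hs : μ (Y ⁻¹' s) = 1) : ∀ᵐ ω ∂μ, Y ω ∈ s :=
  (ae_iff_measure_eq (hY s.measurableSet).nullMeasurableSet).2 (by rwa [measure_univ])

theorem measure_add_eq_succ_of_indepFun {X Y : Ω → ℕ} (hY : Measurable Y)
    (hXY : IndepFun X Y μ) (hY01 : ∀ᵐ ω ∂μ, Y ω ∈ ({0, 1} : Finset ℕ)) (d : ℕ) :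
    μ {ω | X ω + Y ω = d + 1}
      = μ {ω | Y ω = 0} * μ {ω | X ω = d + 1} + μ {ω | Y ω = 1} * μ {ω | X ω = d} := by
  have hfib : ∀ j ∈ ({0, 1} : Finset ℕ), {ω | X ω + Y ω = d + 1} ∩ Y ⁻¹' {j}
      = X ⁻¹' {d + 1 - j} ∩ Y ⁻¹' {j} := by
    intro j hj
    ext ω
    simp only [Finset.mem_insert, Finset.mem_singleton] at hj
    simp only [mem_inter_iff, mem_ofPred_eq, mem_preimage, mem_singleton_iff]
    omega
  rw [measure_eq_sum_measure_inter_preimage_singleton hY hY01, Finset.sum_congr rfl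
    fun j hj => by rw [hfib j hj, hXY.measure_inter_preimage_eq_mul _ _
      (measurableSet_singleton _) (measurableSet_singleton _), mul_comm],
    Finset.sum_pair zero_ne_one]
  rfl

end TotalProbability

theorem one_sub_ofReal_one_div_add_one {x : ℝ} (hx : 0 ≤ x) :
    1 - ENNReal.ofReal (1 / (x + 1)) = ENNReal.ofReal (x / (x + 1)) := by
  rw [← ENNReal.ofReal_one, ← ENNReal.ofReal_sub _ (by positivity)]
  congr 1
  field_simp
  ring

namespace IsHoppeParents

variable {Ω : Type*} [MeasurableSpace Ω] {θ : ℝ} {μ : Measure Ω} {U : ℕ → Ω → ℕ}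

theorem ae_mem_Icc [IsProbabilityMeasure μ] (hU : IsHoppeParents θ μ U) (k : ℕ) :
    ∀ᵐ ω ∂μ, U k ω ∈ Finset.Icc 1 (k + 1) :=
  ae_mem_of_measure_preimage_eq_one (hU.meas k) (by simpa [preimage] using hU.range k)

theorem measure_succ_eq_mul (hθ : 0 < θ) (hU : IsHoppeParents θ μ U) {j k : ℕ} (hj : 1 ≤ j)
    (hjk : j ≤ k + 1) :
    μ {ω | U (k + 1) ω = j}
      = ENNReal.ofReal ((θ + k) / (θ + k + 1)) * μ {ω | U k ω = j} := by
  have hk : 0 < θ + k := by positivity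
  rcases hj.eq_or_lt with rfl | hj
  · rw [hU.root, hU.root, ← ENNReal.ofReal_mul (by positivity)]
    congr 1
    push_cast
    field_simp
    ring
  · rw [hU.nonroot _ _ hj (by omega), hU.nonroot _ _ hj hjk, ← ENNReal.ofReal_mul (by positivity)]
    congr 1
    push_cast
    field_simp
    ring

theorem measure_hoppeDepth_add_two_succ [IsProbabilityMeasure μ] (hU : IsHoppeParents θ μ U)
    (k d : ℕ) :
    μ {ω | hoppeDepth U ω (k + 2) = d + 1}
      = ∑ j ∈ Finset.Icc 1 (k + 1), μ {ω | U k ω = j} * μ {ω | hoppeDepth U ω j = d} := by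
  rw [measure_eq_sum_measure_inter_preimage_singleton (hU.meas k) (hU.ae_mem_Icc k)]
  refine Finset.sum_congr rfl fun j hj => ?_
  have hfib : {ω | hoppeDepth U ω (k + 2) = d + 1} ∩ U k ⁻¹' {j}
      = (fun ω => hoppeDepth U ω j) ⁻¹' {d} ∩ U k ⁻¹' {j} := by
    ext ω
    simp only [mem_inter_iff, mem_ofPred_eq, mem_preimage, mem_singleton_iff,
      and_congr_left_iff]
    rintro rfl
    rw [hoppeDepth_add_two_of_le (Finset.mem_Icc.1 hj).2, Nat.add_right_cancel_iff]
  have hind := indepFun_hoppeDepth_parent hU.indep hU.meas (Finset.mem_Icc.1 hj).2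
  rw [hfib, hind.measure_inter_preimage_eq_mul _ _ (measurableSet_singleton _)
    (measurableSet_singleton _), mul_comm]
  rfl

theorem measure_hoppeDepth_add_three_succ [IsProbabilityMeasure μ] (hθ : 0 < θ)
    (hU : IsHoppeParents θ μ U) (k d : ℕ) :
    μ {ω | hoppeDepth U ω (k + 3) = d + 1}
      = ENNReal.ofReal ((θ + k) / (θ + k + 1)) * μ {ω | hoppeDepth U ω (k + 2) = d + 1}
        + ENNReal.ofReal (1 / (θ + k + 1)) * μ {ω | hoppeDepth U ω (k + 2) = d} := by
  rw [hU.measure_hoppeDepth_add_two_succ (k + 1), Finset.sum_Icc_succ_top (by omega),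
    Finset.sum_congr rfl fun j hj => by
      rw [hU.measure_succ_eq_mul hθ (Finset.mem_Icc.1 hj).1 (Finset.mem_Icc.1 hj).2, mul_assoc],
    ← Finset.mul_sum, ← hU.measure_hoppeDepth_add_two_succ,
    hU.nonroot _ _ (by omega) le_rfl]
  push_cast
  ring_nf

end IsHoppeParents

/-- `hoppeDepthLaw θ m d` is the probability that node `m + 2` has depth `d`. -/
def hoppeDepthLaw (θ : ℝ) : ℕ → ℕ → ℝ≥0∞
  | 0, d => if d = 1 then 1 else 0
  | _ + 1, 0 => 0
  | m + 1, d + 1 => ENNReal.ofReal ((θ + m) / (θ + m + 1)) * hoppeDepthLaw θ m (d + 1)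
      + ENNReal.ofReal (1 / (θ + m + 1)) * hoppeDepthLaw θ m d

theorem IsHoppeParents.measure_hoppeDepth_eq {Ω : Type*} [MeasurableSpace Ω] {θ : ℝ}
    {μ : Measure Ω} [IsProbabilityMeasure μ] {U : ℕ → Ω → ℕ} (hθ : 0 < θ)
    (hU : IsHoppeParents θ μ U) (m d : ℕ) :
    μ {ω | hoppeDepth U ω (m + 2) = d} = hoppeDepthLaw θ m d := by
  induction m generalizing d with
  | zero => by_cases hd : d = 1 <;> simp [hoppeDepth_two, hoppeDepthLaw, hd, eq_comm]
  | succ m ih =>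
    cases d with
    | zero => simp [hoppeDepth_add_two, hoppeDepthLaw]
    | succ d => rw [hU.measure_hoppeDepth_add_three_succ hθ, ih, ih, hoppeDepthLaw]

theorem measure_one_add_sum_eq_hoppeDepthLaw {Ω : Type*} [MeasurableSpace Ω] {θ : ℝ}
    (hθ : 0 < θ) {μ : Measure Ω} [IsProbabilityMeasure μ] {B : ℕ → Ω → ℕ}
    (hBmeas : ∀ i, Measurable (B i)) (hBindep : iIndepFun B μ) {N : ℕ}
    (hB1 : ∀ i, 1 ≤ i → i ≤ N → μ {ω | B i ω = 1} = ENNReal.ofReal (1 / (θ + i)))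
    (hB0 : ∀ i, 1 ≤ i → i ≤ N → μ {ω | B i ω = 0} = 1 - ENNReal.ofReal (1 / (θ + i))) :
    ∀ m ≤ N, ∀ d, μ {ω | 1 + ∑ i ∈ Finset.Icc 1 m, B i ω = d} = hoppeDepthLaw θ m d := by
  intro m
  induction m with
  | zero => intro _ d; by_cases hd : d = 1 <;> simp [hoppeDepthLaw, hd, eq_comm]
  | succ m ih =>
    intro hm d
    have hcast : θ + ((m + 1 : ℕ) : ℝ) = θ + m + 1 := by push_cast; ring
    have hB1' := hB1 (m + 1) (by omega) hm
    have hB0' := hB0 (m + 1) (by omega) hm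
    rw [hcast] at hB1' hB0'
    have hsplit : ∀ ω, 1 + ∑ i ∈ Finset.Icc 1 (m + 1), B i ω
        = (1 + ∑ i ∈ Finset.Icc 1 m, B i ω) + B (m + 1) ω := fun ω => by
      rw [Finset.sum_Icc_succ_top (by omega), add_assoc]
    simp_rw [hsplit]
    cases d with
    | zero => simp [hoppeDepthLaw]
    | succ d =>
      have hind : IndepFun (fun ω => 1 + ∑ i ∈ Finset.Icc 1 m, B i ω) (B (m + 1)) μ := by
        have := (hBindep.indepFun_finsetSum_of_notMem hBmeas
          (by simp : m + 1 ∉ Finset.Icc 1 m)).comp (measurable_const_add 1) measurable_id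
        simpa only [Function.comp_def, Finset.sum_apply, id] using this
      have hB01 : ∀ᵐ ω ∂μ, B (m + 1) ω ∈ ({0, 1} : Finset ℕ) := by
        refine ae_mem_of_measure_preimage_eq_one (hBmeas _) ?_
        rw [← sum_measure_preimage_singleton _ fun j _ => hBmeas _ (measurableSet_singleton j),
          Finset.sum_pair zero_ne_one]
        refine (congrArg₂ (· + ·) hB0' hB1').trans (tsub_add_cancel_of_le ?_)
        exact ENNReal.ofReal_le_one.2 ((div_le_one (by positivity)).2 (by linarith))
      rw [measure_add_eq_succ_of_indepFun (hBmeas _) hind hB01, hoppeDepthLaw, ← ih (by omega),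
        ← ih (by omega), ← one_sub_ofReal_one_div_add_one (by positivity), ← hB0', ← hB1']

/-- The depth of the `n`-th node of a Hoppe tree with parameter `θ` is distributed as
`1 + ∑_{i=1}^{n-2} B_i` with `B_i` independent Bernoulli of parameter `1 / (θ + i)`. -/
theorem hoppe_depth_distributional_identity
    {Ω Ω' : Type*} [MeasurableSpace Ω] [MeasurableSpace Ω']
    (θ : ℝ) (hθ : 0 < θ) (n : ℕ) (hn : 2 ≤ n)
    (μ : Measure Ω) [IsProbabilityMeasure μ] (U : ℕ → Ω → ℕ) (hU : IsHoppeParents θ μ U)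
    (μ' : Measure Ω') [IsProbabilityMeasure μ']
    (B : ℕ → Ω' → ℕ) (hBmeas : ∀ i, Measurable (B i))
    (hBindep : iIndepFun B μ')
    (hB1 : ∀ i : ℕ, 1 ≤ i → i ≤ n - 2 →
      μ' {ω | B i ω = 1} = ENNReal.ofReal (1 / (θ + i)))
    (hB0 : ∀ i : ℕ, 1 ≤ i → i ≤ n - 2 →
      μ' {ω | B i ω = 0} = 1 - ENNReal.ofReal (1 / (θ + i))) :
    Measure.map (fun ω => hoppeDepth U ω n) μ
      = Measure.map (fun ω => 1 + ∑ i ∈ Finset.Icc 1 (n - 2), B i ω) μ' := by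
  refine Measure.ext_of_singleton fun d => ?_
  rw [Measure.map_apply (measurable_hoppeDepth hU.meas n) (measurableSet_singleton d),
    Measure.map_apply (by fun_prop) (measurableSet_singleton d)]
  have hdepth := hU.measure_hoppeDepth_eq hθ (n - 2) d
  rw [Nat.sub_add_cancel hn] at hdepth
  exact hdepth.trans
    (measure_one_add_sum_eq_hoppeDepthLaw hθ hBmeas hBindep hB1 hB0 _ le_rfl d).symm

end
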